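/- Let (R, m) be a local commutative ring, S a commutative ring, f : R → S a ring homomorphism, and J a proper ideal of S with J ⊆ f(R) ∩ Jac(S). Then the amalgamation R ⋈^f J is a Gaussian ring if and only if R is a Gaussian ring, J² = 0, and f(r)·J = f(r)²·J for every r ∈ m. -/

import Mathlib

open Pointwise

/-- The amalgamation `R ⋈^f J` of `R` with `S` along the ideal `J` with respect to
`f : R →+* S`, as a subring of `R × S`. -/
def amalgamation {R S : Type*} [CommRing R] [CommRing S] (f : R →+* S) (J : Ideal S) :
    Subring (R × S) where
  carrier := {p | ∃ j ∈ J, p.2 = f p.1 + j}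
  zero_mem' := ⟨0, J.zero_mem, by simp⟩
  one_mem' := ⟨0, J.zero_mem, by simp⟩
  add_mem' := by
    rintro ⟨a, a'⟩ ⟨b, b'⟩ ⟨j, hj, h1⟩ ⟨k, hk, h2⟩
    exact ⟨j + k, J.add_mem hj hk, by simp_all; ring⟩
  neg_mem' := by
    rintro ⟨a, a'⟩ ⟨j, hj, h1⟩
    exact ⟨-j, J.neg_mem hj, by simp_all; ring⟩
  mul_mem' := by
    rintro ⟨a, a'⟩ ⟨b, b'⟩ ⟨j, hj, h1⟩ ⟨k, hk, h2⟩
    refine ⟨f a * k + j * f b + j * k, ?_, by simp_all; ring⟩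
    exact J.add_mem (J.add_mem (J.mul_mem_left _ hk) (J.mul_mem_right _ hj))
      (J.mul_mem_right _ hj)

/-- The content ideal of a polynomial: the ideal generated by its coefficients. -/
def contentIdeal {A : Type*} [CommRing A] (p : Polynomial A) : Ideal A :=
  Ideal.span (Set.range p.coeff)

/-- A commutative ring is Gaussian if the content ideal is multiplicative. -/
def IsGaussianRing (A : Type*) [CommRing A] : Prop :=
  ∀ p q : Polynomial A, contentIdeal (p * q) = contentIdeal p * contentIdeal q

/-!
A local ring `B` is Gaussian iff it satisfies Tsang's conditions: for all `a, b`, the ideal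
`(a, b) ^ 2` is `(a ^ 2)` or `(b ^ 2)`, and `a * b = 0` with `a ^ 2 ∣ b ^ 2` forces `b ^ 2 = 0`.
Gaussianity gives these by testing products of linear polynomials. Conversely, if `a` is a
coefficient of `p` or `q` whose square dominates all the others, then `p * q = a ^ 2 * (α * β)`
where `α` has a unit coefficient, and McCoy's theorem gives `c(β) ≤ c(α * β)`.

The amalgamation is the pullback of `R → S ⧸ J` and `S → S ⧸ J`, hence local when `J` lies in
the Jacobson radical. If `J ^ 2 = 0` it is a split square-zero extension of `R`, and the condition
`f r • J = f r ^ 2 • J` makes every square `x ^ 2` an associate of `(x.1, f x.1) ^ 2`; this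
carries Tsang's conditions from `R` to `R ⋈^f J`. Conversely, Tsang's conditions for
`R ⋈^f J`, tested on `(0, j)`, `(r, 0)` and `(r, f r)`, force `J ^ 2 = 0` and
`f r • J = f r ^ 2 • J`.
-/

open Polynomial (C X)
open scoped Polynomial

section ContentIdeal

variable {B : Type*} [CommRing B]

theorem contentIdeal_eq_polynomial_contentIdeal (p : B[X]) :
    contentIdeal p = p.contentIdeal := by
  refine le_antisymm (Ideal.span_le.2 ?_) (Ideal.span_le.2 fun c hc => ?_)
  · rintro _ ⟨n, rfl⟩
    exact p.coeff_mem_contentIdeal n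
  · obtain ⟨n, -, rfl⟩ := Polynomial.mem_coeffs_iff.1 hc
    exact Ideal.subset_span ⟨n, rfl⟩

theorem isGaussianRing_iff : IsGaussianRing B ↔
    ∀ p q : B[X], (p * q).contentIdeal = p.contentIdeal * q.contentIdeal := by
  simp only [IsGaussianRing, contentIdeal_eq_polynomial_contentIdeal]

namespace Polynomial

theorem contentIdeal_le_iff {p : B[X]} {I : Ideal B} :
    p.contentIdeal ≤ I ↔ ∀ n, p.coeff n ∈ I := by
  refine ⟨fun h n => h (p.coeff_mem_contentIdeal n), fun h => ?_⟩
  rw [contentIdeal_def, Ideal.span_le]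
  intro c hc
  obtain ⟨n, -, rfl⟩ := mem_coeffs_iff.1 hc
  exact h n

theorem contentIdeal_mul_contentIdeal_le_iff {p q : B[X]} {I : Ideal B} :
    p.contentIdeal * q.contentIdeal ≤ I ↔ ∀ i k, p.coeff i * q.coeff k ∈ I := by
  refine ⟨fun h i k => h (Ideal.mul_mem_mul (p.coeff_mem_contentIdeal i)
    (q.coeff_mem_contentIdeal k)), fun h => ?_⟩
  rw [contentIdeal_def, contentIdeal_def, Ideal.span_mul_span', Ideal.span_le]
  rintro _ ⟨u, hu, v, hv, rfl⟩
  obtain ⟨i, -, rfl⟩ := mem_coeffs_iff.1 hu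
  obtain ⟨k, -, rfl⟩ := mem_coeffs_iff.1 hv
  exact h i k

theorem map_quotient_mk_eq_zero_iff {p : B[X]} {I : Ideal B} :
    p.map (Ideal.Quotient.mk I) = 0 ↔ p.contentIdeal ≤ I := by
  simp [Polynomial.ext_iff, contentIdeal_le_iff, Ideal.Quotient.eq_zero_iff_mem]

/-- By McCoy's theorem, a polynomial with a unit coefficient is a nonzerodivisor; apply this in
`(B ⧸ c(p * q))[X]`. -/
theorem contentIdeal_le_contentIdeal_mul_of_isUnit_coeff {p : B[X]} {j : ℕ}
    (hj : IsUnit (p.coeff j)) (q : B[X]) : q.contentIdeal ≤ (p * q).contentIdeal := by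
  set I := (p * q).contentIdeal
  have hp : p.map (Ideal.Quotient.mk I) ∈ nonZeroDivisors (B ⧸ I)[X] :=
    mem_nonzeroDivisors_of_coeff_mem j (by
      rw [coeff_map]
      exact (hj.map _).mem_nonZeroDivisors)
  rw [← map_quotient_mk_eq_zero_iff]
  refine (mem_nonZeroDivisors_iff.1 hp).1 _ ?_
  rw [← Polynomial.map_mul, map_quotient_mk_eq_zero_iff]

theorem mul_mem_contentIdeal_C_mul (c : B) {r : B[X]} {x : B} (hx : x ∈ r.contentIdeal) :
    c * x ∈ (C c * r).contentIdeal := by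
  have : r.contentIdeal ≤ Submodule.comap (LinearMap.mulLeft B c) (C c * r).contentIdeal := by
    rw [contentIdeal_le_iff]
    intro n
    simpa [← coeff_C_mul] using coeff_mem_contentIdeal _ n
  exact this hx

theorem exists_coeff_mul_eq (p : B[X]) {a c : B} (h : ∀ i, ∃ w, a * p.coeff i = w * c) :
    ∃ α : B[X], ∀ i, a * p.coeff i = α.coeff i * c := by
  classical
  choose w hw using h
  refine ⟨∑ i ∈ p.support, monomial i (w i), fun i => ?_⟩
  simp only [finsetSum_coeff, coeff_monomial, Finset.sum_ite_eq']
  split_ifs with hi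
  · exact hw i
  · rw [notMem_support_iff.1 hi]
    ring

end Polynomial

theorem IsGaussianRing.of_surjective {B' : Type*} [CommRing B'] (hG : IsGaussianRing B)
    (φ : B →+* B') (hφ : Function.Surjective φ) : IsGaussianRing B' := by
  rw [isGaussianRing_iff] at hG ⊢
  intro p q
  obtain ⟨p, rfl⟩ := Polynomial.map_surjective φ hφ p
  obtain ⟨q, rfl⟩ := Polynomial.map_surjective φ hφ q
  simp only [← Polynomial.map_mul, Polynomial.contentIdeal_map_eq_map_contentIdeal, hG,
    Ideal.map_mul]

end ContentIdeal

section Tsang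

variable {B : Type*} [CommRing B]

/-- `SquareDominates a b` says that `(a, b) ^ 2 = (a ^ 2)`. -/
def SquareDominates (a b : B) : Prop :=
  a ^ 2 ∣ a * b ∧ a ^ 2 ∣ b ^ 2

theorem SquareDominates.refl (a : B) : SquareDominates a a :=
  ⟨by rw [sq], dvd_rfl⟩

theorem squareDominates_zero (a : B) : SquareDominates a 0 :=
  ⟨by simp, by simp⟩

theorem SquareDominates.of_sq_dvd_sq {a b x y : B} (hab : a * b = x * a ^ 2 + y * b ^ 2)
    (h : a ^ 2 ∣ b ^ 2) : SquareDominates a b :=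
  ⟨hab ▸ dvd_add (dvd_mul_left _ _) (dvd_mul_of_dvd_right h _), h⟩

/-- Tsang's characterization of local Gaussian rings. -/
structure TsangConditions (B : Type*) [CommRing B] : Prop where
  total : ∀ a b : B, SquareDominates a b ∨ SquareDominates b a
  sq_eq_zero : ∀ a b : B, a * b = 0 → a ^ 2 ∣ b ^ 2 → b ^ 2 = 0

namespace TsangConditions

theorem squareDominates_trans (h : TsangConditions B) {a b c : B} (hab : SquareDominates a b)
    (hbc : SquareDominates b c) : SquareDominates a c := by
  refine ⟨?_, hab.2.trans hbc.2⟩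
  rcases h.total a c with hac | hca
  · exact hac.1
  · rw [mul_comm]
    exact (hab.2.trans hbc.2).trans hca.1

theorem sq_eq_zero_or_sq_eq_zero (h : TsangConditions B) {a b : B} (hab : a * b = 0) :
    a ^ 2 = 0 ∨ b ^ 2 = 0 := by
  rcases h.total a b with hd | hd
  · exact .inr (h.sq_eq_zero a b hab hd.2)
  · exact .inl (h.sq_eq_zero b a (by rw [mul_comm, hab]) hd.2)

theorem mul_eq_zero_of_sq_eq_zero (h : TsangConditions B) {a b : B} (ha : a ^ 2 = 0)
    (hb : b ^ 2 = 0) : a * b = 0 := by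
  rcases h.total a b with hd | hd
  · exact zero_dvd_iff.1 (ha ▸ hd.1)
  · exact mul_comm a b ▸ zero_dvd_iff.1 (hb ▸ hd.1)

/-- Writing `b = w a + u` and `c = v a + u'`, we get `a u = a u' = 0`, hence `u ^ 2 = u' ^ 2 = 0`
since `a ^ 2 ≠ 0`, and then `u u' = 0`. -/
theorem mul_eq_sq_mul (h : TsangConditions B) {a b c w v : B} (ha : a ^ 2 ≠ 0)
    (hb : a * b = w * a ^ 2) (hc : a * c = v * a ^ 2) : b * c = a ^ 2 * (w * v) := by
  have sq_eq_zero {u : B} (hu : a * u = 0) : u ^ 2 = 0 :=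
    (h.sq_eq_zero_or_sq_eq_zero hu).resolve_left ha
  have hu : a * (b - w * a) = 0 := by linear_combination hb
  have hu' : a * (c - v * a) = 0 := by linear_combination hc
  have huu' := h.mul_eq_zero_of_sq_eq_zero (sq_eq_zero hu) (sq_eq_zero hu')
  linear_combination huu' + v * hu + w * hu'

theorem exists_dominating_coeff (h : TsangConditions B) (p q : B[X]) :
    ∃ z : ℕ ⊕ ℕ, ∀ z',
      SquareDominates (Sum.elim p.coeff q.coeff z) (Sum.elim p.coeff q.coeff z') := by
  let r : B → B → Prop := fun a b => SquareDominates b a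
  have : IsTrans B r := ⟨fun _ _ _ hab hbc => h.squareDominates_trans hbc hab⟩
  have hdir : Directed r (Sum.elim p.coeff q.coeff) := fun z z' =>
    (h.total _ _).elim (fun hd => ⟨z, .refl _, hd⟩) (fun hd => ⟨z', hd, .refl _⟩)
  obtain ⟨z, hz⟩ := hdir.finset_le
    ((Finset.range (p.natDegree + 1)).disjSum (Finset.range (q.natDegree + 1)))
  refine ⟨z, fun z' => ?_⟩
  by_cases hz' : z' ∈ (Finset.range (p.natDegree + 1)).disjSum (Finset.range (q.natDegree + 1))
  · exact hz z' hz'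
  · rcases z' with i | k <;> simp only [Finset.inl_mem_disjSum, Finset.inr_mem_disjSum,
      Finset.mem_range, not_lt] at hz' <;>
      simpa [Polynomial.coeff_eq_zero_of_natDegree_lt hz'] using squareDominates_zero _

theorem coeff_mul_coeff_mem_contentIdeal [IsLocalRing B] (h : TsangConditions B) {p q : B[X]}
    {i₀ : ℕ} (hp : ∀ i, SquareDominates (p.coeff i₀) (p.coeff i))
    (hq : ∀ k, SquareDominates (p.coeff i₀) (q.coeff k)) (i k : ℕ) :
    p.coeff i * q.coeff k ∈ (p * q).contentIdeal := by
  set a := p.coeff i₀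
  by_cases ha : a ^ 2 = 0
  · rw [h.mul_eq_zero_of_sq_eq_zero (zero_dvd_iff.1 (ha ▸ (hp i).2))
      (zero_dvd_iff.1 (ha ▸ (hq k).2))]
    exact zero_mem _
  obtain ⟨α, hα⟩ := p.exists_coeff_mul_eq fun i => (hp i).1.imp fun w hw => by
    rw [hw, mul_comm]
  obtain ⟨β, hβ⟩ := q.exists_coeff_mul_eq fun k => (hq k).1.imp fun w hw => by
    rw [hw, mul_comm]
  have hpq : p * q = C (a ^ 2) * (α * β) := by
    ext n
    rw [Polynomial.coeff_C_mul, Polynomial.coeff_mul, Polynomial.coeff_mul, Finset.mul_sum]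
    exact Finset.sum_congr rfl fun x _ => h.mul_eq_sq_mul ha (hα x.1) (hβ x.2)
  have hunit : IsUnit (α.coeff i₀) := by
    refine (IsLocalRing.isUnit_or_isUnit_one_sub_self _).resolve_right fun hu => ha ?_
    exact (hu.mul_right_eq_zero).1 (by linear_combination hα i₀)
  rw [h.mul_eq_sq_mul ha (hα i) (hβ k), hpq]
  exact Polynomial.mul_mem_contentIdeal_C_mul _
    (Polynomial.contentIdeal_le_contentIdeal_mul_of_isUnit_coeff hunit β
      (Ideal.mul_mem_left _ _ (β.coeff_mem_contentIdeal k)))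

theorem isGaussianRing [IsLocalRing B] (h : TsangConditions B) : IsGaussianRing B := by
  rw [isGaussianRing_iff]
  intro p q
  refine le_antisymm (p.contentIdeal_mul_le_mul_contentIdeal q)
    (Polynomial.contentIdeal_mul_contentIdeal_le_iff.2 ?_)
  obtain ⟨z, hz⟩ := h.exists_dominating_coeff p q
  rcases z with i₀ | k₀
  · exact h.coeff_mul_coeff_mem_contentIdeal (fun i => hz (.inl i)) (fun k => hz (.inr k))
  · intro i k
    rw [mul_comm p, mul_comm (p.coeff i)]
    exact h.coeff_mul_coeff_mem_contentIdeal (fun k => hz (.inr k)) (fun i => hz (.inl i)) k i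

end TsangConditions

end Tsang

namespace IsGaussianRing

variable {B : Type*} [CommRing B]

theorem mul_mem_span_of_linear (hG : IsGaussianRing B) (a b c d : B) {u v : B}
    (hu : u ∈ ({a, b} : Set B)) (hv : v ∈ ({c, d} : Set B)) :
    u * v ∈ Ideal.span {a * c, a * d + b * c, b * d} := by
  have mem_linear {a b u : B} (hu : u ∈ ({a, b} : Set B)) :
      u ∈ (C a * X + C b).contentIdeal := by
    rcases hu with rfl | rfl
    · convert (C u * X + C b).coeff_mem_contentIdeal 1 using 1
      simp
    · convert (C a * X + C u).coeff_mem_contentIdeal 0 using 1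
      simp
  have hprod := (isGaussianRing_iff.1 hG (C a * X + C b) (C c * X + C d)).ge
    (Ideal.mul_mem_mul (mem_linear hu) (mem_linear hv))
  refine Polynomial.contentIdeal_le_iff.2 (fun n => ?_) hprod
  have : (C a * X + C b) * (C c * X + C d) =
      C (a * c) * X ^ 2 + C (a * d + b * c) * X + C (b * d) := by
    simp only [map_mul, map_add]
    ring
  rw [this]
  rcases n with _ | _ | _ | n <;>
    simp only [Polynomial.coeff_add, Polynomial.coeff_C_mul, Polynomial.coeff_X_pow,
      Polynomial.coeff_X, Polynomial.coeff_C] <;> norm_num <;>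
    first | exact zero_mem _ | exact Ideal.subset_span (by simp)

theorem exists_mul_eq (hG : IsGaussianRing B) (a b : B) :
    ∃ x y, a * b = x * a ^ 2 + y * b ^ 2 := by
  obtain ⟨x, _, y, h⟩ := Submodule.mem_span_triple.1
    (hG.mul_mem_span_of_linear a b a (-b) (u := b) (v := a) (by simp) (by simp))
  exact ⟨x, -y, by simp only [smul_eq_mul] at h; linear_combination -h⟩

theorem sq_eq_zero_of_mul_eq_zero (hG : IsGaussianRing B) {a b : B} (hab : a * b = 0)
    (hdvd : a ^ 2 ∣ b ^ 2) : b ^ 2 = 0 := by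
  obtain ⟨s, hs⟩ := hdvd
  obtain ⟨x, y, z, h⟩ := Submodule.mem_span_triple.1
    (hG.mul_mem_span_of_linear (s * a) b (-b) a (u := b) (v := -b) (by simp) (by simp))
  simp only [smul_eq_mul] at h
  linear_combination h + (x * s - z) * hab + y * hs

theorem sq_dvd_sq_or_of_not_isUnit [IsLocalRing B] (hG : IsGaussianRing B) {a b x y : B}
    (hab : a * b = x * a ^ 2 + y * b ^ 2) (hx : ¬IsUnit x) : a ^ 2 ∣ b ^ 2 ∨ b ^ 2 ∣ a ^ 2 := by
  set c := a - y * b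
  obtain ⟨α, β, γ, h⟩ := Submodule.mem_span_triple.1
    (hG.mul_mem_span_of_linear c b b c (u := b) (v := b) (by simp) (by simp))
  simp only [smul_eq_mul] at h
  -- `c * b = x * a ^ 2` and `c ^ 2 = (1 - 2 * x * y) * a ^ 2 - y ^ 2 * b ^ 2`
  have key : (1 - β * (1 - y ^ 2)) * b ^ 2 = (β + x * (α + γ - 2 * β * y)) * a ^ 2 := by
    linear_combination (α + γ - 2 * β * y) * hab - h
  rcases IsLocalRing.isUnit_or_isUnit_one_sub_self (β * (1 - y ^ 2)) with hu | hu
  · have hv : IsUnit (β + x * (α + γ - 2 * β * y)) := by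
      refine IsLocalRing.notMem_maximalIdeal.1 fun hv => ?_
      have hm : x * (α + γ - 2 * β * y) ∈ IsLocalRing.maximalIdeal B :=
        Ideal.mul_mem_right _ _ hx
      exact IsLocalRing.notMem_maximalIdeal.2 (isUnit_of_mul_isUnit_left hu)
        ((Submodule.add_mem_iff_left _ hm).1 hv)
    exact .inr (hv.dvd_mul_left.1 ⟨_, key.symm.trans (mul_comm _ _)⟩)
  · exact .inl (hu.dvd_mul_left.1 ⟨_, key.trans (mul_comm _ _)⟩)

theorem sq_dvd_sq_or_of_isUnit [IsLocalRing B] (hG : IsGaussianRing B) {a b x y : B}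
    (hab : a * b = x * a ^ 2 + y * b ^ 2) (hx : IsUnit x) (hy : IsUnit y) :
    a ^ 2 ∣ b ^ 2 ∨ b ^ 2 ∣ a ^ 2 := by
  have hspan :
      Ideal.span {x * a * b, x * a * a + y * b * b, y * b * a} ≤ Ideal.span {a * b} := by
    simp only [Ideal.span_le, Set.insert_subset_iff, Set.singleton_subset_iff, SetLike.mem_coe,
      Ideal.mem_span_singleton']
    exact ⟨⟨x, by ring⟩, ⟨1, by linear_combination hab⟩, ⟨y, by ring⟩⟩
  obtain ⟨d, hd⟩ := Ideal.mem_span_singleton'.1 (hspan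
    (hG.mul_mem_span_of_linear (x * a) (y * b) b a (u := x * a) (v := a) (by simp) (by simp)))
  obtain ⟨e, he⟩ := Ideal.mem_span_singleton'.1 (hspan
    (hG.mul_mem_span_of_linear (x * a) (y * b) b a (u := y * b) (v := b) (by simp) (by simp)))
  by_cases hd' : IsUnit d
  · have hab' : a ^ 2 ∣ a * b := hd'.dvd_mul_left.1 ⟨x, by linear_combination hd⟩
    refine .inl (hy.dvd_mul_left.1 ?_)
    rw [show y * b ^ 2 = e * (a * b) by linear_combination -he]
    exact dvd_mul_of_dvd_right hab' e
  by_cases he' : IsUnit e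
  · have hab' : b ^ 2 ∣ a * b := he'.dvd_mul_left.1 ⟨y, by linear_combination he⟩
    refine .inr (hx.dvd_mul_left.1 ?_)
    rw [show x * a ^ 2 = d * (a * b) by linear_combination -hd]
    exact dvd_mul_of_dvd_right hab' d
  have hde : IsUnit (1 - (d + e)) := IsLocalRing.isUnit_one_sub_self_of_mem_nonunits _
    (IsLocalRing.nonunits_add hd' he')
  have hab0 : a * b = 0 := hde.mul_right_eq_zero.1 (by linear_combination hab - hd - he)
  have hb : b ^ 2 = 0 := hy.mul_right_eq_zero.1 (by linear_combination -he + e * hab0)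
  exact .inl (hb ▸ dvd_zero _)

theorem tsangConditions [IsLocalRing B] (hG : IsGaussianRing B) : TsangConditions B where
  total a b := by
    obtain ⟨x, y, hab⟩ := hG.exists_mul_eq a b
    have hba : b * a = y * b ^ 2 + x * a ^ 2 := by linear_combination hab
    have hdvd : a ^ 2 ∣ b ^ 2 ∨ b ^ 2 ∣ a ^ 2 := by
      by_cases hx : IsUnit x
      · by_cases hy : IsUnit y
        · exact hG.sq_dvd_sq_or_of_isUnit hab hx hy
        · exact (hG.sq_dvd_sq_or_of_not_isUnit hba hy).symm
      · exact hG.sq_dvd_sq_or_of_not_isUnit hab hx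
    exact hdvd.imp (.of_sq_dvd_sq hab) (.of_sq_dvd_sq hba)
  sq_eq_zero _ _ := hG.sq_eq_zero_of_mul_eq_zero

end IsGaussianRing

section SplitSquareZeroExtension

variable {A R : Type*} [CommRing A] [CommRing R] {π : A →+* R} {ι : R →+* A}

theorem exists_mul_eq_of_splitSquareZero (hπι : Function.LeftInverse π ι)
    (hK : ∀ e ∈ RingHom.ker π, ∀ e' ∈ RingHom.ker π, e * e' = 0)
    (hι : ∀ r, ∀ e ∈ RingHom.ker π, ∃ e' ∈ RingHom.ker π, ι r * e = ι r ^ 2 * e')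
    (x y : A) : ∃ e ∈ RingHom.ker π, ∃ e' ∈ RingHom.ker π,
      x * y = ι (π x) * ι (π y) + ι (π x) ^ 2 * e + ι (π y) ^ 2 * e' := by
  have hker (z : A) : z - ι (π z) ∈ RingHom.ker π := by
    rw [RingHom.mem_ker, map_sub, hπι, sub_self]
  obtain ⟨e, he, hxe⟩ := hι (π x) _ (hker y)
  obtain ⟨e', he', hye'⟩ := hι (π y) _ (hker x)
  exact ⟨e, he, e', he', by linear_combination hxe + hye' + hK _ (hker x) _ (hker y)⟩

theorem exists_sq_eq_of_splitSquareZero (hπι : Function.LeftInverse π ι)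
    (hK : ∀ e ∈ RingHom.ker π, ∀ e' ∈ RingHom.ker π, e * e' = 0)
    (hι : ∀ r, ∀ e ∈ RingHom.ker π, ∃ e' ∈ RingHom.ker π, ι r * e = ι r ^ 2 * e')
    (x : A) : ∃ e ∈ RingHom.ker π, x ^ 2 = ι (π x) ^ 2 * (1 + e) := by
  obtain ⟨e, he, e', he', h⟩ := exists_mul_eq_of_splitSquareZero hπι hK hι x x
  exact ⟨e + e', add_mem he he', by linear_combination h⟩

theorem squareDominates_of_map_of_splitSquareZero (hπι : Function.LeftInverse π ι)
    (hK : ∀ e ∈ RingHom.ker π, ∀ e' ∈ RingHom.ker π, e * e' = 0)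
    (hι : ∀ r, ∀ e ∈ RingHom.ker π, ∃ e' ∈ RingHom.ker π, ι r * e = ι r ^ 2 * e')
    {x y : A} (h : SquareDominates (π x) (π y)) : SquareDominates x y := by
  obtain ⟨⟨w, hw⟩, ⟨s, hs⟩⟩ := h
  obtain ⟨e, he, hx⟩ := exists_sq_eq_of_splitSquareZero hπι hK hι x
  obtain ⟨e', -, hy⟩ := exists_sq_eq_of_splitSquareZero hπι hK hι y
  obtain ⟨e₁, -, e₂, -, hxy⟩ := exists_mul_eq_of_splitSquareZero hπι hK hι x y
  have hw' : ι (π x) * ι (π y) = ι (π x) ^ 2 * ι w := by simpa using congrArg ι hw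
  have hs' : ι (π y) ^ 2 = ι (π x) ^ 2 * ι s := by simpa using congrArg ι hs
  have hee := hK _ he _ he
  -- as `e ^ 2 = 0`, `1 + e` is a unit with inverse `1 - e`
  refine ⟨⟨(1 - e) * (ι w + e₁ + ι s * e₂), ?_⟩, ⟨(1 - e) * ι s * (1 + e'), ?_⟩⟩
  · linear_combination hxy - (1 - e) * (ι w + e₁ + ι s * e₂) * hx + hw' + e₂ * hs'
      + ι (π x) ^ 2 * (ι w + e₁ + ι s * e₂) * hee
  · linear_combination hy - (1 - e) * ι s * (1 + e') * hx + (1 + e') * hs'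
      + ι (π x) ^ 2 * ι s * (1 + e') * hee

theorem sq_eq_zero_of_map_of_splitSquareZero (hπι : Function.LeftInverse π ι)
    (hK : ∀ e ∈ RingHom.ker π, ∀ e' ∈ RingHom.ker π, e * e' = 0)
    (hι : ∀ r, ∀ e ∈ RingHom.ker π, ∃ e' ∈ RingHom.ker π, ι r * e = ι r ^ 2 * e')
    {y : A} (h : π y ^ 2 = 0) : y ^ 2 = 0 := by
  obtain ⟨e, -, hy⟩ := exists_sq_eq_of_splitSquareZero hπι hK hι y
  rw [hy, ← map_pow, h, map_zero, zero_mul]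

theorem TsangConditions.of_splitSquareZero (hR : TsangConditions R)
    (hπι : Function.LeftInverse π ι)
    (hK : ∀ e ∈ RingHom.ker π, ∀ e' ∈ RingHom.ker π, e * e' = 0)
    (hι : ∀ r, ∀ e ∈ RingHom.ker π, ∃ e' ∈ RingHom.ker π, ι r * e = ι r ^ 2 * e') :
    TsangConditions A where
  total x y := (hR.total (π x) (π y)).imp
    (squareDominates_of_map_of_splitSquareZero hπι hK hι)
    (squareDominates_of_map_of_splitSquareZero hπι hK hι)
  sq_eq_zero x y hxy hdvd := sq_eq_zero_of_map_of_splitSquareZero hπι hK hι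
    (hR.sq_eq_zero _ _ (by rw [← map_mul, hxy, map_zero]) (by simpa using map_dvd π hdvd))

end SplitSquareZeroExtension

theorem Ideal.smul_eq_sq_smul_iff {S : Type*} [CommRing S] (s : S) (J : Ideal S) :
    s • J = s ^ 2 • J ↔ ∀ j ∈ J, ∃ k ∈ J, s * j = s ^ 2 * k := by
  have mem (t x : S) : x ∈ t • J ↔ ∃ j ∈ J, t * j = x :=
    Submodule.mem_smul_pointwise_iff_exists _ _ _
  refine ⟨fun h j hj => ?_, fun h => SetLike.ext fun x => ?_⟩
  · obtain ⟨k, hk, hjk⟩ := (mem _ _).1 (h ▸ (mem _ _).2 ⟨j, hj, rfl⟩)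
    exact ⟨k, hk, hjk.symm⟩
  rw [mem, mem]
  constructor
  · rintro ⟨j, hj, rfl⟩
    obtain ⟨k, hk, hjk⟩ := h j hj
    exact ⟨k, hk, hjk.symm⟩
  · rintro ⟨k, hk, rfl⟩
    exact ⟨s * k, J.mul_mem_left s hk, by ring⟩

namespace amalgamation

variable {R S : Type*} [CommRing R] [CommRing S] {f : R →+* S} {J : Ideal S}

theorem mem_iff {p : R × S} : p ∈ amalgamation f J ↔ p.2 - f p.1 ∈ J :=
  ⟨fun ⟨j, hj, h⟩ => by rwa [h, add_sub_cancel_left], fun h => ⟨_, h, by ring⟩⟩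

theorem eq_pullback :
    amalgamation f J = ((Ideal.Quotient.mk J).comp f).pullback (Ideal.Quotient.mk J) := by
  ext p
  rw [mem_iff, RingHom.mem_eqLocus, eq_comm]
  exact Ideal.Quotient.eq.symm

theorem isLocalRing [IsLocalRing R] (hJ : J ≤ Ideal.jacobson ⊥) :
    IsLocalRing (amalgamation f J) := by
  have := isLocalHom_of_le_jacobson_bot J hJ
  rw [eq_pullback]
  exact RingHom.isLocalRing_pullback _ _

variable (f J) in
def fst : amalgamation f J →+* R :=
  (RingHom.fst R S).comp (amalgamation f J).subtype

variable (f J) in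
def graph : R →+* amalgamation f J :=
  ((RingHom.id R).prod f).codRestrict _ fun r => mem_iff.2 (by simp)

theorem fst_surjective : Function.Surjective (fst f J) :=
  fun r => ⟨graph f J r, rfl⟩

theorem snd_mem_of_mem_ker {e : amalgamation f J} (he : e ∈ RingHom.ker (fst f J)) :
    (e : R × S).2 ∈ J := by
  have he : (e : R × S).1 = 0 := he
  simpa [he] using mem_iff.1 e.2

variable (f) in
def inr {j : S} (hj : j ∈ J) : amalgamation f J :=
  ⟨(0, j), mem_iff.2 (by simpa using hj)⟩

theorem exists_mul_eq_sq_mul [IsLocalRing R]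
    (hstar : ∀ r ∈ IsLocalRing.maximalIdeal R, f r • J = f r ^ 2 • J) (r : R) {j : S}
    (hj : j ∈ J) : ∃ k ∈ J, f r * j = f r ^ 2 * k := by
  by_cases hr : r ∈ IsLocalRing.maximalIdeal R
  · exact (Ideal.smul_eq_sq_smul_iff _ _).1 (hstar r hr) j hj
  · obtain ⟨u, hu⟩ := ((IsLocalRing.notMem_maximalIdeal.1 hr).map f).exists_left_inv
    exact ⟨u * j, J.mul_mem_left u hj, by linear_combination (-(f r * j)) * hu⟩

theorem tsangConditions [IsLocalRing R] (hR : TsangConditions R) (hJJ : J * J = ⊥)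
    (hstar : ∀ r ∈ IsLocalRing.maximalIdeal R, f r • J = f r ^ 2 • J) :
    TsangConditions (amalgamation f J) := by
  refine hR.of_splitSquareZero (π := fst f J) (ι := graph f J) (fun _ => rfl) ?_ ?_
  · intro e he e' he'
    have h2 : (e : R × S).2 * (e' : R × S).2 = 0 := by
      simpa [hJJ] using Ideal.mul_mem_mul (snd_mem_of_mem_ker he) (snd_mem_of_mem_ker he')
    have h1 : (e : R × S).1 = 0 := he
    exact Subtype.ext (Prod.ext (show (e : R × S).1 * _ = 0 by rw [h1, zero_mul]) h2)
  · intro r e he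
    obtain ⟨k, hk, hrk⟩ := exists_mul_eq_sq_mul hstar r (snd_mem_of_mem_ker he)
    have h1 : (e : R × S).1 = 0 := he
    refine ⟨inr f hk, rfl, Subtype.ext (Prod.ext ?_ hrk)⟩
    show r * (e : R × S).1 = r ^ 2 * 0
    rw [h1, mul_zero, mul_zero]

theorem mul_self_eq_bot (hJf : (J : Set S) ⊆ Set.range f)
    (h : TsangConditions (amalgamation f J)) : J * J = ⊥ := by
  have sq_inr {j : S} (hj : j ∈ J) (hj2 : j ^ 2 = 0) : inr f hj ^ 2 = 0 :=
    Subtype.ext (Prod.ext (zero_pow two_ne_zero) hj2)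
  have hsq : ∀ j ∈ J, j ^ 2 = 0 := by
    intro j hj
    obtain ⟨r, rfl⟩ := hJf hj
    let y : amalgamation f J := ⟨(r, 0), mem_iff.2 (by simpa using J.neg_mem hj)⟩
    have hxy : inr f hj * y = 0 := Subtype.ext (Prod.ext (zero_mul r) (mul_zero (f r)))
    rcases h.sq_eq_zero_or_sq_eq_zero hxy with hx | hy
    · exact congrArg (·.1.2) hx
    · have hr : r ^ 2 = 0 := congrArg (·.1.1) hy
      rw [← map_pow, hr, map_zero]
  rw [← le_bot_iff, Ideal.mul_le]
  intro j hj k hk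
  exact Ideal.mem_bot.2 (congrArg (·.1.2) (h.mul_eq_zero_of_sq_eq_zero
    (sq_inr hj (hsq j hj)) (sq_inr hk (hsq k hk))))

theorem smul_eq_sq_smul (hJJ : J * J = ⊥) (h : TsangConditions (amalgamation f J)) (r : R) :
    f r • J = f r ^ 2 • J := by
  rw [Ideal.smul_eq_sq_smul_iff]
  intro j hj
  have hj2 : j ^ 2 = 0 := by simpa [sq, hJJ] using Ideal.mul_mem_mul hj hj
  rcases h.total (graph f J r) (inr f hj) with ⟨⟨W, hW⟩, -⟩ | ⟨⟨W, hW⟩, -⟩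
  · have h1 : r * 0 = r ^ 2 * (W : R × S).1 := congrArg (·.1.1) hW
    have h2 : f r * j = f r ^ 2 * (W : R × S).2 := congrArg (·.1.2) hW
    have h1' := congrArg f h1
    rw [mul_zero, map_zero, map_mul, map_pow] at h1'
    exact ⟨_, mem_iff.1 W.2, by linear_combination h2 - h1'⟩
  · have h2 : j * f r = j ^ 2 * (W : R × S).2 := congrArg (·.1.2) hW
    exact ⟨0, J.zero_mem, by linear_combination h2 + (W : R × S).2 * hj2⟩

end amalgamation

theorem stmt17_general {R S : Type*} [CommRing R] [CommRing S] [IsLocalRing R]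
    (f : R →+* S) (J : Ideal S)
    (hJf : (J : Set S) ⊆ Set.range f) (hJjac : J ≤ Ideal.jacobson (⊥ : Ideal S)) :
    IsGaussianRing (amalgamation f J) ↔
      (IsGaussianRing R ∧ J * J = ⊥ ∧
        ∀ r ∈ IsLocalRing.maximalIdeal R, f r • J = (f r) ^ 2 • J) := by
  have := amalgamation.isLocalRing (f := f) hJjac
  constructor
  · intro hG
    have hJJ := amalgamation.mul_self_eq_bot hJf hG.tsangConditions
    exact ⟨hG.of_surjective _ amalgamation.fst_surjective, hJJ,
      fun r _ => amalgamation.smul_eq_sq_smul hJJ hG.tsangConditions r⟩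
  · rintro ⟨hR, hJJ, hstar⟩
    exact (amalgamation.tsangConditions hR.tsangConditions hJJ hstar).isGaussianRing

theorem stmt17 {R S : Type*} [CommRing R] [CommRing S] [IsLocalRing R]
    (f : R →+* S) (J : Ideal S) (hJ : J ≠ ⊤)
    (hJf : (J : Set S) ⊆ Set.range f) (hJjac : J ≤ Ideal.jacobson (⊥ : Ideal S)) :
    IsGaussianRing (amalgamation f J) ↔
      (IsGaussianRing R ∧ J * J = ⊥ ∧
        ∀ r ∈ IsLocalRing.maximalIdeal R, f r • J = (f r) ^ 2 • J) :=
  stmt17_general f J hJf hJjac
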